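/- Fix β ∈ (0,1), α > 0, ε ∈ (0,1), and integers T, r with r = ⌈log(2/ε)/β⌉ and T ≥ log(2/ε)/β + 2α/(βε) + 1. For any integer r_x with 1 ≤ r_x ≤ r, we have (α + T - r_x)/(α(1-(1-β)^{r_x})/β + T - r_x) ≥ (α + T - r)/(α/β + T - r) ≥ (1 - ε/2). -/

import Mathlib

/-!
Since `r < log (2/ε) / β + 1`, the hypothesis on `T` leaves a gap `T - r ≥ 2α/(βε)`.
The first inequality comes from `1 - (1-β)^rx ≤ 1` and the fact that adding more to numerator
and denominator of a fraction below `1` increases it (`α ≤ α/β`, `T - rx ≥ T - r`); for the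
second, the gap makes `α/β ≤ (ε/2)(T - r)`, so the fraction is at least `1 - ε/2`.
-/

lemma add_div_add_le_add_div_add {K : Type*} [Field K] [LinearOrder K] [IsStrictOrderedRing K]
    {a b c d : K} (hab : a ≤ b) (hb : 0 < b) (hd : 0 ≤ d) (hdc : d ≤ c) :
    (a + d) / (b + d) ≤ (a + c) / (b + c) := by
  rw [div_le_div_iff₀ (by linarith) (by linarith)]
  nlinarith [mul_nonneg (sub_nonneg.2 hdc) (sub_nonneg.2 hab)]

lemma one_sub_half_le_add_div_add {K : Type*} [Field K] [LinearOrder K] [IsStrictOrderedRing K]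
    {a q D ε : K} (ha : 0 ≤ a) (hq : 0 < q) (hε : 0 < ε) (hD : 2 * q / ε ≤ D) :
    1 - ε / 2 ≤ (a + D) / (q + D) := by
  have hεD : 2 * q ≤ D * ε := (div_le_iff₀ hε).1 hD
  have hD0 : 0 < D := (by positivity : 0 < 2 * q / ε).trans_le hD
  rw [le_div_iff₀ (by linarith)]
  nlinarith [mul_pos hε hq]

lemma mul_one_sub_pow_div_le_div {K : Type*} [Field K] [LinearOrder K] [IsStrictOrderedRing K]
    {α β : K} (hα : 0 ≤ α) (hβ : 0 ≤ β) (hβ1 : β ≤ 1) (n : ℕ) :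
    α * (1 - (1 - β) ^ n) / β ≤ α / β := by
  gcongr
  exact mul_le_of_le_one_right hα (sub_le_self _ (pow_nonneg (sub_nonneg.2 hβ1) n))

theorem stmt_19_general (β α ε : ℝ) (hβ : β ∈ Set.Ioo (0:ℝ) 1) (hα : α > 0)
    (hε : ε ∈ Set.Ioo (0:ℝ) 1) (T r : ℕ)
    (hr : r = ⌈Real.log (2/ε) / β⌉₊)
    (hT : (T : ℝ) ≥ Real.log (2/ε) / β + 2*α/(β*ε) + 1)
    (rx : ℕ) (hrxr : rx ≤ r) :
    (α + (T : ℝ) - rx) / (α * (1 - (1 - β)^rx) / β + (T : ℝ) - rx) ≥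
        (α + (T : ℝ) - r) / (α/β + (T : ℝ) - r) ∧
      (α + (T : ℝ) - r) / (α/β + (T : ℝ) - r) ≥ 1 - ε/2 := by
  obtain ⟨hβ0, hβ1⟩ := hβ
  obtain ⟨hε0, hε1⟩ := hε
  have hlog : 0 ≤ Real.log (2/ε) / β :=
    div_nonneg (Real.log_nonneg (by rw [le_div_iff₀ hε0]; linarith)) hβ0.le
  have hgap : 2*α/(β*ε) ≤ (T:ℝ) - r := by
    have := Nat.ceil_lt_add_one (R := ℝ) hlog
    rw [← hr] at this
    linarith
  have hgap_pos : 0 < (T:ℝ) - r := (by positivity : 0 < 2*α/(β*ε)).trans_le hgap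
  have hrx_le : (rx:ℝ) ≤ r := by exact_mod_cast hrxr
  simp only [add_sub_assoc, ge_iff_le]
  refine ⟨?_, ?_⟩
  · calc (α + (T - r)) / (α/β + (T - r)) ≤ (α + (T - rx)) / (α/β + (T - rx)) :=
          add_div_add_le_add_div_add (le_div_self hα.le hβ0 hβ1.le) (by positivity)
            hgap_pos.le (by linarith)
      _ ≤ (α + (T - rx)) / (α * (1 - (1 - β)^rx) / β + (T - rx)) := by
          apply div_le_div_of_nonneg_left (by linarith) _
            (by linarith [mul_one_sub_pow_div_le_div hα.le hβ0.le hβ1.le rx])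
          have : 0 ≤ 1 - (1 - β)^rx := sub_nonneg.2 (pow_le_one₀ (by linarith) (by linarith))
          have : 0 ≤ α * (1 - (1 - β)^rx) / β := by positivity
          linarith
  · refine one_sub_half_le_add_div_add hα.le (by positivity) hε0 ?_
    rwa [mul_div_assoc', div_div]

theorem stmt_19 (β α ε : ℝ) (hβ : β ∈ Set.Ioo (0:ℝ) 1) (hα : α > 0)
    (hε : ε ∈ Set.Ioo (0:ℝ) 1) (T r : ℕ)
    (hr : r = ⌈Real.log (2/ε) / β⌉₊)
    (hT : (T : ℝ) ≥ Real.log (2/ε) / β + 2*α/(β*ε) + 1)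
    (rx : ℕ) (hrx : 1 ≤ rx) (hrxr : rx ≤ r) :
    (α + (T : ℝ) - rx) / (α * (1 - (1 - β)^rx) / β + (T : ℝ) - rx) ≥
        (α + (T : ℝ) - r) / (α/β + (T : ℝ) - r) ∧
      (α + (T : ℝ) - r) / (α/β + (T : ℝ) - r) ≥ 1 - ε/2 :=
  stmt_19_general β α ε hβ hα hε T r hr hT rx hrxr
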